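/- arXiv:1701.03493 — 4 statements merged into one kernel-verified Lean document; each statement's English description precedes it below -/
import Mathlib

section
/- For the exponential-weights selection rule S_η on a matrix x ∈ [0,1]^{n×m} (P(S_η(x)=t) ∝ exp((η/2)·Σ_i x_i^t)), the expected column sum of the selected column satisfies E_{S_η}[Σ_{i=1}^n x_i^{S_η(x)}] ≥ max_{t∈[m]} Σ_{i=1}^n x_i^t − 2·ln(m)/η. -/
open Real

/-!
Write `p = softmax(β s)` with partition function `Z = ∑ exp (β s)`. Since `log p = β s - log Z`,
`β ∑ p s = ∑ p log p + log Z`. The negative entropy `∑ p log p` is at least `-log m` by Jensen,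
and `log Z ≥ β s t` for every `t`; dividing by `β` gives the regret bound `max s - log m / β`.
-/

open Finset

section ExpWeights

variable {ι : Type*} [Fintype ι]

theorem neg_log_card_le_sum_mul_log {p : ι → ℝ} (hp : ∀ i, 0 ≤ p i) (hsum : ∑ i, p i = 1) :
    -log (Fintype.card ι) ≤ ∑ i, p i * log (p i) := by
  obtain ⟨i, -, -⟩ := exists_ne_zero_of_sum_ne_zero (hsum ▸ one_ne_zero)
  have hcard : (0 : ℝ) < Fintype.card ι := Nat.cast_pos.mpr (Fintype.card_pos_iff.mpr ⟨i⟩)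
  have jensen := convexOn_mul_log.map_sum_le (t := univ) (w := fun _ ↦ (Fintype.card ι : ℝ)⁻¹)
    (p := p) (fun _ _ ↦ by positivity) (by simp [hcard.ne']) (fun i _ ↦ hp i)
  simp only [smul_eq_mul, ← mul_sum, hsum, mul_one, log_inv] at jensen
  have := mul_le_mul_of_nonneg_left jensen hcard.le
  rwa [← mul_assoc, ← mul_assoc, mul_inv_cancel₀ hcard.ne', one_mul, one_mul] at this

noncomputable def expWeights (β : ℝ) (s : ι → ℝ) (i : ι) : ℝ :=
  exp (β * s i) / ∑ j, exp (β * s j)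

variable (β : ℝ) (s : ι → ℝ)

theorem mul_le_log_sum_exp_mul (i : ι) : β * s i ≤ log (∑ j, exp (β * s j)) := by
  rw [← log_exp (β * s i)]
  exact log_le_log (exp_pos _)
    (single_le_sum (f := fun j ↦ exp (β * s j)) (fun _ _ ↦ (exp_pos _).le) (mem_univ i))

variable [Nonempty ι]

theorem sum_exp_mul_pos : 0 < ∑ j, exp (β * s j) :=
  sum_pos (fun _ _ ↦ exp_pos _) univ_nonempty

theorem expWeights_pos (i : ι) : 0 < expWeights β s i :=
  div_pos (exp_pos _) (sum_exp_mul_pos β s)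

theorem sum_expWeights : ∑ i, expWeights β s i = 1 := by
  simp only [expWeights, ← sum_div]
  exact div_self (sum_exp_mul_pos β s).ne'

theorem log_expWeights (i : ι) :
    log (expWeights β s i) = β * s i - log (∑ j, exp (β * s j)) := by
  rw [expWeights, log_div (exp_pos _).ne' (sum_exp_mul_pos β s).ne', log_exp]

theorem mul_sum_expWeights_mul_eq :
    β * ∑ i, expWeights β s i * s i =
      ∑ i, expWeights β s i * log (expWeights β s i) + log (∑ j, exp (β * s j)) := by
  simp only [log_expWeights, mul_sub, mul_sum, sum_sub_distrib, ← sum_mul, sum_expWeights,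
    one_mul]
  ring_nf

theorem sub_log_card_div_le_sum_expWeights_mul {β : ℝ} (hβ : 0 < β) (i : ι) :
    s i - log (Fintype.card ι) / β ≤ ∑ j, expWeights β s j * s j := by
  have entropy := neg_log_card_le_sum_mul_log (fun j ↦ (expWeights_pos β s j).le)
    (sum_expWeights β s)
  rw [← mul_le_mul_iff_of_pos_left hβ, mul_sub, mul_div_cancel₀ _ hβ.ne',
    mul_sum_expWeights_mul_eq]
  linarith [mul_le_log_sum_exp_mul β s i]

end ExpWeights

theorem stmt3_general (n m : ℕ) (hm : 0 < m) (η : ℝ) (hη : 0 < η)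
    (x : Fin n → Fin m → ℝ) :
    let p : Fin m → ℝ := fun t =>
      Real.exp (η / 2 * ∑ i, x i t) / ∑ t', Real.exp (η / 2 * ∑ i, x i t')
    ∑ t, p t * (∑ i, x i t) ≥ (⨆ t, ∑ i, x i t) - 2 * Real.log m / η := by
  intro p
  have : NeZero m := ⟨hm.ne'⟩
  have regret := sub_log_card_div_le_sum_expWeights_mul (fun t ↦ ∑ i, x i t) (half_pos hη)
  rw [Fintype.card_fin, div_div_eq_mul_div, mul_comm (log _)] at regret
  rw [ge_iff_le, sub_le_iff_le_add]
  exact ciSup_le fun t ↦ sub_le_iff_le_add.mp (regret t)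

theorem stmt3 (n m : ℕ) (hm : 0 < m) (η : ℝ) (hη : 0 < η)
    (x : Fin n → Fin m → ℝ) (hx : ∀ i t, x i t ∈ Set.Icc (0 : ℝ) 1) :
    let p : Fin m → ℝ := fun t =>
      Real.exp (η / 2 * ∑ i, x i t) / ∑ t', Real.exp (η / 2 * ∑ i, x i t')
    ∑ t, p t * (∑ i, x i t) ≥ (⨆ t, ∑ i, x i t) - 2 * Real.log m / η :=
  stmt3_general n m hm η hη x
end

section
/- Let X be a random n×m matrix with entries in [0,1] and independent rows, and suppose E[Σ_{i=1}^n X_i^t] ≤ μ for every column t ∈ [m]. Let S_η be the exponential-weights selection rule (P(S_η(x)=t) ∝ exp((η/2)·Σ_i x_i^t)). Then E[Σ_{i=1}^n X_i^{S_η(X)}] ≤ e^η·μ. -/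
/-!
Write `W_t = softmax(η/2 · Σ_j X_j^t)` for the probability of selecting column `t`. Removing
row `i` from the scores changes them by `η/2 · X_i ∈ [0, η/2]`, so `W_t` is within a factor
`e^{η/2}` (in both directions) of the leave-one-out weight `V_{i,t}`, which is independent of
`X_i`. Hence `E[W_t X_i^t] ≤ e^{η/2} E[V_{i,t}] E[X_i^t] ≤ e^η E[W_t] E[X_i^t]`; summing over
`i` and using `E[Σ_i X_i^t] ≤ μ` and `Σ_t W_t = 1` gives the bound.
-/

open MeasureTheory ProbabilityTheory Real

noncomputable def softmax {ι : Type*} [Fintype ι] (s : ι → ℝ) (t : ι) : ℝ :=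
  exp (s t) / ∑ t', exp (s t')

section Softmax

variable {ι : Type*} [Fintype ι]

lemma sum_exp_pos [Nonempty ι] (s : ι → ℝ) : 0 < ∑ t, exp (s t) :=
  Finset.sum_pos (fun _ _ => exp_pos _) Finset.univ_nonempty

lemma softmax_mem_Icc (s : ι → ℝ) (t : ι) : softmax s t ∈ Set.Icc 0 1 :=
  have : Nonempty ι := ⟨t⟩
  ⟨div_nonneg (exp_pos _).le (sum_exp_pos s).le,
    div_le_one_of_le₀ (Finset.single_le_sum (f := fun t' => exp (s t'))
      (fun _ _ => (exp_pos _).le) (Finset.mem_univ t)) (sum_exp_pos s).le⟩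

lemma sum_softmax [Nonempty ι] (s : ι → ℝ) : ∑ t, softmax s t = 1 := by
  simp only [softmax]
  rw [← Finset.sum_div, div_self (sum_exp_pos s).ne']

@[fun_prop]
lemma Measurable.softmax {α : Type*} [MeasurableSpace α] {f : α → ι → ℝ} (hf : Measurable f)
    (t : ι) : Measurable fun a => softmax (f a) t := by
  unfold _root_.softmax
  fun_prop

lemma softmax_add_le {a d : ι → ℝ} {c : ℝ} (hd : ∀ t, d t ∈ Set.Icc 0 c) (t : ι) :
    softmax (a + d) t ≤ exp c * softmax a t := by
  have : Nonempty ι := ⟨t⟩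
  have hden : ∑ t', exp (a t') ≤ ∑ t', exp ((a + d) t') :=
    Finset.sum_le_sum fun t' _ => exp_le_exp.2 (by simp [(hd t').1])
  rw [softmax, softmax, ← mul_div_assoc, ← exp_add]
  refine div_le_div₀ (exp_pos _).le (exp_le_exp.2 ?_) (sum_exp_pos a) hden
  simp only [Pi.add_apply]
  linarith [(hd t).2]

lemma softmax_le_softmax_add {a d : ι → ℝ} {c : ℝ} (hd : ∀ t, d t ∈ Set.Icc 0 c) (t : ι) :
    softmax a t ≤ exp c * softmax (a + d) t := by
  have : Nonempty ι := ⟨t⟩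
  have hden : ∑ t', exp ((a + d) t') ≤ exp c * ∑ t', exp (a t') := by
    rw [Finset.mul_sum]
    refine Finset.sum_le_sum fun t' _ => ?_
    rw [← exp_add, Pi.add_apply]
    exact exp_le_exp.2 (by linarith [(hd t').2])
  rw [softmax, softmax, ← mul_div_assoc, div_le_div_iff₀ (sum_exp_pos a) (sum_exp_pos _)]
  calc exp (a t) * ∑ t', exp ((a + d) t')
      ≤ exp ((a + d) t) * (exp c * ∑ t', exp (a t')) :=
        mul_le_mul (exp_le_exp.2 (by simp [(hd t).1])) hden
          (Finset.sum_nonneg fun _ _ => (exp_pos _).le) (exp_pos _).le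
    _ = exp c * exp ((a + d) t) * ∑ t', exp (a t') := by ring

end Softmax

section Decoupling

variable {Ω : Type*} [MeasurableSpace Ω] {P : Measure Ω}

lemma integral_mul_le_of_comparable_indepFun {W V Y : Ω → ℝ} {c c' : ℝ} (hc : 0 ≤ c)
    (hVY : IndepFun V Y P) (hY : ∀ ω, 0 ≤ Y ω) (hWV : ∀ ω, W ω ≤ c * V ω)
    (hVW : ∀ ω, V ω ≤ c' * W ω) (hW : Integrable W P) (hV : Integrable V P)
    (hYi : Integrable Y P) (hWY : Integrable (W * Y) P) :
    ∫ ω, W ω * Y ω ∂P ≤ c * c' * (∫ ω, W ω ∂P) * ∫ ω, Y ω ∂P := by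
  have hVY_int : ∫ ω, V ω * Y ω ∂P = (∫ ω, V ω ∂P) * ∫ ω, Y ω ∂P :=
    hVY.integral_mul_eq_mul_integral hV.aestronglyMeasurable hYi.aestronglyMeasurable
  have hV_le : ∫ ω, V ω ∂P ≤ c' * ∫ ω, W ω ∂P := by
    rw [← integral_const_mul]
    exact integral_mono hV (hW.const_mul _) hVW
  calc ∫ ω, W ω * Y ω ∂P
      ≤ ∫ ω, c * (V ω * Y ω) ∂P :=
        integral_mono hWY ((hVY.integrable_mul hV hYi).const_mul c) fun ω => by
          simpa only [Pi.mul_apply, mul_assoc] using mul_le_mul_of_nonneg_right (hWV ω) (hY ω)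
    _ = c * ((∫ ω, V ω ∂P) * ∫ ω, Y ω ∂P) := by rw [integral_const_mul, hVY_int]
    _ ≤ c * ((c' * ∫ ω, W ω ∂P) * ∫ ω, Y ω ∂P) := by
        gcongr
        exact integral_nonneg hY
    _ = c * c' * (∫ ω, W ω ∂P) * ∫ ω, Y ω ∂P := by ring

end Decoupling

section ExponentialWeights

variable {Ω : Type*} [MeasurableSpace Ω] {P : Measure Ω} [IsProbabilityMeasure P]
  {ι κ : Type*} [Fintype ι] [Fintype κ]

lemma integral_softmax_mul_le {X : ι → Ω → κ → ℝ} (hmeas : ∀ i, Measurable (X i))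
    (hbdd : ∀ i t ω, X i ω t ∈ Set.Icc (0 : ℝ) 1) (hindep : iIndepFun X P) {η : ℝ} (hη : 0 ≤ η)
    (i : ι) (t : κ) :
    ∫ ω, softmax (fun t => η / 2 * ∑ j, X j ω t) t * X i ω t ∂P ≤
      exp η * (∫ ω, softmax (fun t => η / 2 * ∑ j, X j ω t) t ∂P) * ∫ ω, X i ω t ∂P := by
  classical
  set S : Ω → κ → ℝ := ∑ j ∈ Finset.univ.erase i, X j
  have hS : IndepFun S (X i) P :=
    hindep.indepFun_finsetSum_of_notMem hmeas (Finset.notMem_erase i Finset.univ)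
  have hscores : ∀ ω, (fun t => η / 2 * ∑ j, X j ω t) =
      (fun t => η / 2 * S ω t) + fun t => η / 2 * X i ω t := by
    intro ω
    ext t
    simp [S, Finset.sum_apply, ← mul_add]
  have hshift : ∀ ω t, η / 2 * X i ω t ∈ Set.Icc 0 (η / 2) := fun ω t =>
    ⟨by nlinarith [(hbdd i t ω).1], by nlinarith [(hbdd i t ω).2]⟩
  have hWV : ∀ ω, softmax (fun t => η / 2 * ∑ j, X j ω t) t ≤
      exp (η / 2) * softmax (fun t => η / 2 * S ω t) t := fun ω => by
    rw [hscores ω]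
    exact softmax_add_le (hshift ω) t
  have hVW : ∀ ω, softmax (fun t => η / 2 * S ω t) t ≤
      exp (η / 2) * softmax (fun t => η / 2 * ∑ j, X j ω t) t := fun ω => by
    rw [hscores ω]
    exact softmax_le_softmax_add (hshift ω) t
  have hφ : Measurable fun s : κ → ℝ => softmax (fun t => η / 2 * s t) t := by fun_prop
  have hXi : Measurable fun ω => X i ω t := by fun_prop
  have hV : Measurable fun ω => softmax (fun t => η / 2 * S ω t) t :=
    hφ.comp (by simp only [S, Finset.sum_fn]; fun_prop)
  have hW : Measurable fun ω => softmax (fun t => η / 2 * ∑ j, X j ω t) t := by fun_prop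
  have key := integral_mul_le_of_comparable_indepFun
    (V := fun ω => softmax (fun t => η / 2 * S ω t) t) (exp_pos (η / 2)).le
    (hS.comp hφ (measurable_pi_apply t)) (fun ω => (hbdd i t ω).1) hWV hVW
    (.of_mem_Icc 0 1 hW.aemeasurable (ae_of_all _ fun ω => softmax_mem_Icc _ t))
    (.of_mem_Icc 0 1 hV.aemeasurable (ae_of_all _ fun ω => softmax_mem_Icc _ t))
    (.of_mem_Icc 0 1 hXi.aemeasurable (ae_of_all _ (hbdd i t)))
    (.of_mem_Icc 0 1 (hW.mul hXi).aemeasurable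
      (ae_of_all _ fun ω => unitInterval.mul_mem (softmax_mem_Icc _ t) (hbdd i t ω)))
  rwa [← exp_add, add_halves] at key

lemma integral_sum_mul_sum_le {W : κ → Ω → ℝ} {X : ι → Ω → κ → ℝ} {C μ : ℝ} (hC : 0 ≤ C)
    (hW0 : ∀ t ω, 0 ≤ W t ω) (hW1 : ∀ ω, ∑ t, W t ω = 1) (hW : ∀ t, Integrable (W t) P)
    (hX : ∀ i t, Integrable (fun ω => X i ω t) P)
    (hWX : ∀ i t, Integrable (fun ω => W t ω * X i ω t) P)
    (hcol : ∀ i t, ∫ ω, W t ω * X i ω t ∂P ≤ C * (∫ ω, W t ω ∂P) * ∫ ω, X i ω t ∂P)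
    (hμ : ∀ t, ∫ ω, ∑ i, X i ω t ∂P ≤ μ) :
    ∫ ω, ∑ t, W t ω * ∑ i, X i ω t ∂P ≤ C * μ := by
  have hsplit : ∫ ω, ∑ t, W t ω * ∑ i, X i ω t ∂P = ∑ t, ∑ i, ∫ ω, W t ω * X i ω t ∂P := by
    simp_rw [Finset.mul_sum]
    rw [integral_finsetSum _ fun t _ => integrable_finsetSum _ fun i _ => hWX i t]
    exact Finset.sum_congr rfl fun t _ => integral_finsetSum _ fun i _ => hWX i t
  have hmass : ∑ t, ∫ ω, W t ω ∂P = 1 := by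
    rw [← integral_finsetSum _ fun t _ => hW t]
    simp [hW1]
  calc ∫ ω, ∑ t, W t ω * ∑ i, X i ω t ∂P
      ≤ ∑ t, ∑ i, C * (∫ ω, W t ω ∂P) * ∫ ω, X i ω t ∂P := by
        rw [hsplit]
        gcongr with t _ i _
        exact hcol i t
    _ = ∑ t, C * (∫ ω, W t ω ∂P) * ∫ ω, ∑ i, X i ω t ∂P := by
        refine Finset.sum_congr rfl fun t _ => ?_
        rw [integral_finsetSum _ fun i _ => hX i t, Finset.mul_sum]
    _ ≤ ∑ t, C * (∫ ω, W t ω ∂P) * μ := by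
        gcongr with t _
        · exact mul_nonneg hC (integral_nonneg (hW0 t))
        · exact hμ t
    _ = C * μ := by rw [← Finset.sum_mul, ← Finset.mul_sum, hmass]; ring

end ExponentialWeights

theorem stmt6 {Ω : Type*} [MeasureSpace Ω] [IsProbabilityMeasure (ℙ : Measure Ω)]
    (n m : ℕ) (hm : 0 < m) (η : ℝ) (hη : 0 < η)
    (X : Fin n → Ω → (Fin m → ℝ)) (hmeas : ∀ i, Measurable (X i))
    (hbdd : ∀ i t ω, X i ω t ∈ Set.Icc (0 : ℝ) 1)
    (hindep : iIndepFun X ℙ)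
    (μ : ℝ) (hμ : ∀ t, (∫ ω, ∑ i, X i ω t) ≤ μ) :
    (∫ ω, ∑ t,
        (Real.exp (η / 2 * ∑ i, X i ω t) / ∑ t', Real.exp (η / 2 * ∑ i, X i ω t')) *
          (∑ i, X i ω t)) ≤ Real.exp η * μ := by
  have : Nonempty (Fin m) := ⟨⟨0, hm⟩⟩
  have hX : ∀ i t, Measurable fun ω => X i ω t := by fun_prop
  have hW : ∀ t, Measurable fun ω => softmax (fun t => η / 2 * ∑ i, X i ω t) t := fun t =>
    by fun_prop
  exact integral_sum_mul_sum_le (W := fun t ω => softmax (fun t => η / 2 * ∑ i, X i ω t) t)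
    (exp_pos η).le (fun t ω => (softmax_mem_Icc _ t).1)
    (fun ω => sum_softmax _)
    (fun t => .of_mem_Icc 0 1 (hW t).aemeasurable (ae_of_all _ fun ω => softmax_mem_Icc _ t))
    (fun i t => .of_mem_Icc 0 1 (hX i t).aemeasurable (ae_of_all _ (hbdd i t)))
    (fun i t => .of_mem_Icc 0 1 ((hW t).mul (hX i t)).aemeasurable
      (ae_of_all _ fun ω => unitInterval.mul_mem (softmax_mem_Icc _ t) (hbdd i t ω)))
    (fun i t => integral_softmax_mul_le hmeas hbdd hindep hη.le i t) hμ
end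

section
/- Let X be a random n×m matrix with entries in [0,1] whose rows are independent. Then for every η > 0, E[max_{t∈[m]} Σ_{i=1}^n X_i^t] ≤ e^η · max_{t∈[m]} E[Σ_{i=1}^n X_i^t] + 2·ln(m)/η. -/
/-!
For `x ∈ [0, 1]`, convexity of `exp` gives `exp (η x) ≤ 1 + (e^η - 1) x ≤ exp ((e^η - 1) x)`, so
by independence every column sum `S_t` has `E[exp (η S_t)] ≤ exp ((e^η - 1) E[S_t])`. Jensen's
inequality and `exp (η max_t S_t) ≤ ∑_t exp (η S_t)` then give
`η E[max_t S_t] ≤ log m + (e^η - 1) max_t E[S_t]`, and `e^η - 1 ≤ η e^η` finishes the proof.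
-/

open MeasureTheory ProbabilityTheory Real

lemma Real.exp_mul_le_one_add_mul_of_mem_Icc (η : ℝ) {x : ℝ} (hx : x ∈ Set.Icc (0 : ℝ) 1) :
    exp (η * x) ≤ 1 + (exp η - 1) * x := by
  have h := convexOn_exp.2 (Set.mem_univ 0) (Set.mem_univ η) (sub_nonneg.2 hx.2) hx.1
    (sub_add_cancel 1 x)
  simp only [smul_eq_mul, mul_zero, zero_add, exp_zero, mul_one] at h
  rw [mul_comm]
  linarith

lemma Real.exp_sub_one_le_mul_exp (η : ℝ) : exp η - 1 ≤ η * exp η := by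
  have h := mul_le_mul_of_nonneg_right (one_sub_le_exp_neg η) (exp_pos η).le
  rw [← exp_add, neg_add_cancel, exp_zero] at h
  linarith

lemma Real.apply_ciSup_le_sum {ι : Type*} [Fintype ι] [Nonempty ι] (a : ι → ℝ) {f : ℝ → ℝ}
    (hf : ∀ x, 0 ≤ f x) : f (⨆ i, a i) ≤ ∑ i, f (a i) := by
  obtain ⟨i, hi⟩ := exists_eq_ciSup_of_finite (f := a)
  rw [← hi]
  exact Finset.single_le_sum (fun j _ => hf (a j)) (Finset.mem_univ i)

namespace ProbabilityTheory

variable {Ω : Type*} [MeasurableSpace Ω] {μ : Measure Ω} [IsProbabilityMeasure μ]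

lemma mgf_le_exp_of_mem_Icc {Y : Ω → ℝ} (hY : AEMeasurable Y μ)
    (hbdd : ∀ᵐ ω ∂μ, Y ω ∈ Set.Icc (0 : ℝ) 1) (η : ℝ) :
    mgf Y μ η ≤ exp ((exp η - 1) * μ[Y]) := by
  have hY_int : Integrable (fun ω => (exp η - 1) * Y ω) μ :=
    (Integrable.of_mem_Icc 0 1 hY hbdd).const_mul _
  calc mgf Y μ η ≤ ∫ ω, 1 + (exp η - 1) * Y ω ∂μ :=
        integral_mono_of_nonneg (ae_of_all _ fun ω => (exp_pos _).le)
          ((integrable_const 1).add hY_int)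
          (hbdd.mono fun ω hω => exp_mul_le_one_add_mul_of_mem_Icc η hω)
    _ = (exp η - 1) * μ[Y] + 1 := by
        rw [integral_add (integrable_const 1) hY_int, integral_const_mul]
        simp [add_comm]
    _ ≤ exp ((exp η - 1) * μ[Y]) := add_one_le_exp _

lemma iIndepFun.mgf_sum_le_exp_of_mem_Icc {ι : Type*} {Y : ι → Ω → ℝ} (hindep : iIndepFun Y μ)
    (hmeas : ∀ i, Measurable (Y i)) (hbdd : ∀ i, ∀ᵐ ω ∂μ, Y i ω ∈ Set.Icc (0 : ℝ) 1)
    (s : Finset ι) (η : ℝ) :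
    mgf (fun ω => ∑ i ∈ s, Y i ω) μ η ≤ exp ((exp η - 1) * ∫ ω, ∑ i ∈ s, Y i ω ∂μ) := by
  have hint : ∀ i ∈ s, Integrable (Y i) μ := fun i _ =>
    Integrable.of_mem_Icc 0 1 (hmeas i).aemeasurable (hbdd i)
  calc mgf (fun ω => ∑ i ∈ s, Y i ω) μ η = ∏ i ∈ s, mgf (Y i) μ η := by
        rw [← Finset.sum_fn]; exact hindep.mgf_sum hmeas s
    _ ≤ ∏ i ∈ s, exp ((exp η - 1) * μ[Y i]) :=
        Finset.prod_le_prod (fun i _ => mgf_nonneg) fun i _ =>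
          mgf_le_exp_of_mem_Icc (hmeas i).aemeasurable (hbdd i) η
    _ = exp ((exp η - 1) * ∫ ω, ∑ i ∈ s, Y i ω ∂μ) := by
        rw [← exp_sum, ← Finset.mul_sum, integral_finsetSum s hint]

variable {ι : Type*} [Fintype ι] [Nonempty ι] {S : ι → Ω → ℝ} {t : ℝ}

lemma exp_mul_integral_iSup_le_sum_mgf (hS : ∀ i, Integrable (S i) μ)
    (hexp : ∀ i, Integrable (fun ω => exp (t * S i ω)) μ) :
    exp (t * ∫ ω, ⨆ i, S i ω ∂μ) ≤ ∑ i, mgf (S i) μ t := by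
  have hmeas : AEMeasurable (fun ω => ⨆ i, S i ω) μ :=
    AEMeasurable.iSup fun i => (hS i).aemeasurable
  have hint : Integrable (fun ω => ⨆ i, S i ω) μ :=
    (integrable_finsetSum _ fun i _ => (hS i).abs).mono' hmeas.aestronglyMeasurable
      (ae_of_all _ fun ω => apply_ciSup_le_sum (fun i => S i ω) abs_nonneg)
  have hsum : Integrable (fun ω => ∑ i, exp (t * S i ω)) μ :=
    integrable_finsetSum _ fun i _ => hexp i
  have hexp_sup : ∀ ω, exp (t * ⨆ i, S i ω) ≤ ∑ i, exp (t * S i ω) := fun ω =>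
    apply_ciSup_le_sum (fun i => S i ω) fun x => (exp_pos (t * x)).le
  calc exp (t * ∫ ω, ⨆ i, S i ω ∂μ) = exp (∫ ω, t * ⨆ i, S i ω ∂μ) := by
        rw [integral_const_mul]
    _ ≤ ∫ ω, exp (t * ⨆ i, S i ω) ∂μ :=
        convexOn_exp.map_integral_le continuous_exp.continuousOn isClosed_univ
          (ae_of_all _ fun _ => Set.mem_univ _) (hint.const_mul t)
          (hsum.mono' ((hmeas.const_mul t).exp.aestronglyMeasurable)
            (ae_of_all _ fun ω => by simpa [abs_of_pos (exp_pos _)] using hexp_sup ω))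
    _ ≤ ∫ ω, ∑ i, exp (t * S i ω) ∂μ :=
        integral_mono_of_nonneg (ae_of_all _ fun _ => (exp_pos _).le) hsum (ae_of_all _ hexp_sup)
    _ = ∑ i, mgf (S i) μ t := integral_finsetSum _ fun i _ => hexp i

lemma mul_integral_iSup_le_log_card_add {c : ℝ} (hS : ∀ i, Integrable (S i) μ)
    (hexp : ∀ i, Integrable (fun ω => exp (t * S i ω)) μ) (hmgf : ∀ i, mgf (S i) μ t ≤ exp c) :
    t * ∫ ω, ⨆ i, S i ω ∂μ ≤ log (Fintype.card ι) + c := by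
  have hcard : (0 : ℝ) < Fintype.card ι := Nat.cast_pos.2 Fintype.card_pos
  rw [← exp_le_exp, exp_add, exp_log hcard]
  calc exp (t * ∫ ω, ⨆ i, S i ω ∂μ) ≤ ∑ i, mgf (S i) μ t := exp_mul_integral_iSup_le_sum_mgf hS hexp
    _ ≤ ∑ _i : ι, exp c := Finset.sum_le_sum fun i _ => hmgf i
    _ = Fintype.card ι * exp c := by simp

end ProbabilityTheory

theorem stmt7 {Ω : Type*} [MeasureSpace Ω] [IsProbabilityMeasure (ℙ : Measure Ω)]
    (n m : ℕ) (hm : 0 < m)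
    (X : Fin n → Ω → (Fin m → ℝ)) (hmeas : ∀ i, Measurable (X i))
    (hbdd : ∀ i t ω, X i ω t ∈ Set.Icc (0 : ℝ) 1)
    (hindep : iIndepFun X ℙ)
    (η : ℝ) (hη : 0 < η) :
    (∫ ω, ⨆ t, ∑ i, X i ω t) ≤
      Real.exp η * (⨆ t, ∫ ω, ∑ i, X i ω t) + 2 * Real.log m / η := by
  have : Nonempty (Fin m) := ⟨⟨0, hm⟩⟩
  have hmeas_col : ∀ t i, Measurable fun ω => X i ω t := fun t i =>
    (measurable_pi_apply t).comp (hmeas i)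
  have hsum_mem : ∀ t ω, ∑ i, X i ω t ∈ Set.Icc (0 : ℝ) n := fun t ω =>
    ⟨Finset.sum_nonneg fun i _ => (hbdd i t ω).1,
      by simpa using Finset.sum_le_sum fun i (_ : i ∈ Finset.univ) => (hbdd i t ω).2⟩
  have hsum_meas : ∀ t, AEMeasurable (fun ω => ∑ i, X i ω t) ℙ := fun t =>
    (Finset.measurable_sum _ fun i _ => hmeas_col t i).aemeasurable
  have hindep_col : ∀ t, iIndepFun (fun i ω => X i ω t) ℙ := fun t =>
    hindep.comp _ fun _ => measurable_pi_apply t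
  set A := ⨆ t, ∫ ω, ∑ i, X i ω t
  have hle_A : ∀ t, ∫ ω, ∑ i, X i ω t ≤ A := le_ciSup (Set.finite_range _).bddAbove
  have hmgf : ∀ t, mgf (fun ω => ∑ i, X i ω t) ℙ η ≤ exp ((exp η - 1) * A) := fun t =>
    ((hindep_col t).mgf_sum_le_exp_of_mem_Icc (hmeas_col t) (fun i => ae_of_all _ (hbdd i t)) _
      η).trans <| exp_le_exp.2 <|
      mul_le_mul_of_nonneg_left (hle_A t) (sub_nonneg.2 (one_le_exp hη.le))
  have hmax := mul_integral_iSup_le_log_card_add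
    (fun t => Integrable.of_mem_Icc 0 n (hsum_meas t) (ae_of_all _ (hsum_mem t)))
    (fun t => integrable_exp_mul_of_mem_Icc (hsum_meas t) (ae_of_all _ (hsum_mem t))) hmgf
  rw [Fintype.card_fin] at hmax
  have hA : 0 ≤ A := Real.iSup_nonneg fun t => integral_nonneg fun ω => (hsum_mem t ω).1
  have hlog : 0 ≤ log m := log_nonneg (Nat.one_le_cast.2 hm)
  rw [← mul_le_mul_iff_of_pos_left hη, mul_add, mul_div_cancel₀ _ hη.ne', ← mul_assoc]
  linarith [mul_le_mul_of_nonneg_right (exp_sub_one_le_mul_exp η) hA]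
end

section
/- Let X_1,...,X_n be independent random variables supported on [0,1] with μ_i = E[X_i], and let Y = Σ_{i=1}^n (X_i − μ_i). For any m ∈ ℕ, if Y^1,...,Y^m are independent copies of Y, then E[max{0, Y^1, ..., Y^m}] ≤ 4·√(n·ln(m+1)). -/
/-!
Hoeffding's lemma makes each `X i - μ i` sub-Gaussian with variance proxy `1/4`, so by
independence `Y` is sub-Gaussian with proxy `n/4`, and so is every copy `Y^t`. For any finitely
many random variables `Y^t` that are sub-Gaussian with proxy `v`, independent or not, Jensen's
inequality and `exp (c * max 0 (max_t Y^t)) ≤ 1 + ∑_t exp (c * Y^t)` give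
`c * E[max 0 (max_t Y^t)] ≤ log (m + 1) + v * c ^ 2 / 2` for every `c > 0`; optimising in `c`
yields `E[max 0 (max_t Y^t)] ≤ √(2 * v * log (m + 1)) = √(n * log (m + 1) / 2)`.
-/

open MeasureTheory ProbabilityTheory Real

open scoped NNReal

lemma le_sqrt_of_forall_pos_mul_le {x v L : ℝ} (hv : 0 ≤ v)
    (h : ∀ c > 0, c * x ≤ L + v * c ^ 2 / 2) : x ≤ √(2 * v * L) := by
  by_contra! hx
  have hx0 : 0 < x := (sqrt_nonneg _).trans_lt hx
  rcases hv.eq_or_lt with rfl | hv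
  · have := h ((|L| + 1) / x) (by positivity)
    rw [div_mul_cancel₀ _ hx0.ne'] at this
    linarith [le_abs_self L]
  · -- `c = x / v` maximises `c * x - v * c ^ 2 / 2`
    have := h (x / v) (by positivity)
    have hxL : x ^ 2 ≤ 2 * v * L := by
      field_simp at this
      nlinarith
    exact hx.not_ge ((le_sqrt hx0.le (by nlinarith)).2 hxL)

lemma exp_mul_max_zero_iSup_le {ι : Type*} [Fintype ι] (f : ι → ℝ) {c : ℝ} (hc : 0 ≤ c) :
    exp (c * max 0 (⨆ i, f i)) ≤ 1 + ∑ i, exp (c * f i) := by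
  have hsum : 0 ≤ ∑ i, exp (c * f i) := by positivity
  rcases le_total (⨆ i, f i) 0 with hle | hle
  · simp [max_eq_left hle, hsum]
  · rcases isEmpty_or_nonempty ι with hι | hι
    · simp
    obtain ⟨i₀, hi₀⟩ := Finite.exists_max f
    calc exp (c * max 0 (⨆ i, f i)) ≤ exp (c * f i₀) := by
          rw [max_eq_right hle]
          gcongr
          exact ciSup_le hi₀
      _ ≤ ∑ i, exp (c * f i) :=
          Finset.single_le_sum (f := fun i ↦ exp (c * f i)) (fun i _ ↦ (exp_pos _).le)
            (Finset.mem_univ i₀)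
      _ ≤ 1 + ∑ i, exp (c * f i) := by linarith

lemma exp_mul_integral_le_mgf {Ω : Type*} [MeasurableSpace Ω] {μ : Measure Ω}
    [IsProbabilityMeasure μ] {X : Ω → ℝ} (hX : Integrable X μ) {t : ℝ}
    (ht : Integrable (fun ω ↦ exp (t * X ω)) μ) : exp (t * ∫ ω, X ω ∂μ) ≤ mgf X μ t := by
  rw [← integral_const_mul]
  exact convexOn_exp.map_integral_le continuousOn_exp isClosed_univ (by simp)
    (hX.const_mul t) ht

section MaxOfSubgaussian

variable {Ω ι : Type*} [MeasurableSpace Ω] {μ : Measure Ω} [Fintype ι] {Y : ι → Ω → ℝ}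
  {v : ℝ≥0}

lemma aemeasurable_max_zero_iSup (hY : ∀ i, AEMeasurable (Y i) μ) :
    AEMeasurable (fun ω ↦ max 0 (⨆ i, Y i ω)) μ :=
  aemeasurable_const.max (AEMeasurable.iSup hY)

lemma integrable_exp_mul_max_zero_iSup [IsFiniteMeasure μ]
    (hY : ∀ i, HasSubgaussianMGF (Y i) v μ) {t : ℝ} (ht : 0 ≤ t) :
    Integrable (fun ω ↦ exp (t * max 0 (⨆ i, Y i ω))) μ := by
  refine Integrable.mono' ((integrable_const 1).add
    (integrable_finsetSum Finset.univ fun i _ ↦ (hY i).integrable_exp_mul t)) ?_ ?_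
  · exact ((aemeasurable_max_zero_iSup fun i ↦ (hY i).aemeasurable).const_mul t).exp
      |>.aestronglyMeasurable
  · filter_upwards with ω
    rw [norm_of_nonneg (exp_pos _).le]
    simpa using exp_mul_max_zero_iSup_le (fun i ↦ Y i ω) ht

lemma mgf_max_zero_iSup_le [IsProbabilityMeasure μ]
    (hY : ∀ i, HasSubgaussianMGF (Y i) v μ) {t : ℝ} (ht : 0 ≤ t) :
    mgf (fun ω ↦ max 0 (⨆ i, Y i ω)) μ t ≤ (Fintype.card ι + 1) * exp (v * t ^ 2 / 2) := by
  have hint : ∀ i, Integrable (fun ω ↦ exp (t * Y i ω)) μ := fun i ↦ (hY i).integrable_exp_mul t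
  calc mgf (fun ω ↦ max 0 (⨆ i, Y i ω)) μ t ≤ ∫ ω, (1 + ∑ i, exp (t * Y i ω)) ∂μ :=
        integral_mono (integrable_exp_mul_max_zero_iSup hY ht)
          ((integrable_const 1).add (integrable_finsetSum Finset.univ fun i _ ↦ hint i))
          fun ω ↦ exp_mul_max_zero_iSup_le (fun i ↦ Y i ω) ht
    _ = 1 + ∑ i, mgf (Y i) μ t := by
        rw [integral_add (integrable_const 1) (integrable_finsetSum Finset.univ fun i _ ↦ hint i),
          integral_finsetSum Finset.univ fun i _ ↦ hint i]
        simp [mgf]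
    _ ≤ 1 + ∑ _i : ι, exp (v * t ^ 2 / 2) := by
        gcongr with i
        exact (hY i).mgf_le t
    _ ≤ (Fintype.card ι + 1) * exp (v * t ^ 2 / 2) := by
        have : 1 ≤ exp (v * t ^ 2 / 2) := one_le_exp (by positivity)
        simp only [Finset.sum_const, Finset.card_univ, nsmul_eq_mul]
        nlinarith

theorem integral_max_zero_iSup_le_of_hasSubgaussianMGF [IsProbabilityMeasure μ]
    (hY : ∀ i, HasSubgaussianMGF (Y i) v μ) :
    ∫ ω, max 0 (⨆ i, Y i ω) ∂μ ≤ √(2 * v * log (Fintype.card ι + 1)) := by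
  set Z : Ω → ℝ := fun ω ↦ max 0 (⨆ i, Y i ω)
  have hZ : Integrable Z μ := by
    refine (integrable_exp_mul_max_zero_iSup hY zero_le_one).mono'
      (aemeasurable_max_zero_iSup fun i ↦ (hY i).aemeasurable).aestronglyMeasurable ?_
    filter_upwards with ω
    rw [norm_of_nonneg (le_max_left _ _), one_mul]
    linarith [add_one_le_exp (Z ω)]
  refine le_sqrt_of_forall_pos_mul_le v.2 fun c hc ↦ ?_
  have hmgf_pos : 0 < mgf Z μ c := mgf_pos (integrable_exp_mul_max_zero_iSup hY hc.le)
  calc c * ∫ ω, Z ω ∂μ ≤ log (mgf Z μ c) :=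
        (le_log_iff_exp_le hmgf_pos).2
          (exp_mul_integral_le_mgf hZ (integrable_exp_mul_max_zero_iSup hY hc.le))
    _ ≤ log ((Fintype.card ι + 1) * exp (v * c ^ 2 / 2)) :=
        log_le_log hmgf_pos (mgf_max_zero_iSup_le hY hc.le)
    _ = log (Fintype.card ι + 1) + v * c ^ 2 / 2 := by
        rw [log_mul (by positivity) (exp_pos _).ne', log_exp]

end MaxOfSubgaussian

theorem stmt9_general {Ω : Type*} [MeasureSpace Ω] [IsProbabilityMeasure (ℙ : Measure Ω)]
    (n : ℕ) (X : Fin n → Ω → ℝ) (hmeas : ∀ i, Measurable (X i))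
    (hbdd : ∀ i ω, X i ω ∈ Set.Icc (0 : ℝ) 1)
    (hindep : iIndepFun X ℙ)
    (μ : Fin n → ℝ) (hμ : ∀ i, μ i = ∫ ω, X i ω)
    (m : ℕ) (Ys : Fin m → Ω → ℝ)
    (hYid : ∀ t, IdentDistrib (Ys t) (fun ω => ∑ i, (X i ω - μ i)) ℙ ℙ) :
    (∫ ω, max 0 (⨆ t, Ys t ω)) ≤ 4 * Real.sqrt (n * Real.log (m + 1)) := by
  have hoeffding : ∀ i, HasSubgaussianMGF (fun ω ↦ X i ω - μ i) ((‖(1 : ℝ) - 0‖₊ / 2) ^ 2) ℙ :=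
    fun i ↦ hμ i ▸ hasSubgaussianMGF_of_mem_Icc (hmeas i).aemeasurable (ae_of_all _ (hbdd i))
  have hsum := HasSubgaussianMGF.sum_of_iIndepFun
    (hindep.comp (fun i x ↦ x - μ i) fun i ↦ measurable_id.sub_const _)
    (s := Finset.univ) fun i _ ↦ hoeffding i
  have hmax := integral_max_zero_iSup_le_of_hasSubgaussianMGF
    fun t ↦ hsum.congr_identDistrib (hYid t).symm
  have hvar : ((∑ _i : Fin n, (‖(1 : ℝ) - 0‖₊ / 2) ^ 2 : ℝ≥0) : ℝ) = n / 4 := by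
    simp; ring
  rw [hvar, Fintype.card_fin] at hmax
  have hL : 0 ≤ log (m + 1) := log_nonneg (by linarith [m.cast_nonneg (α := ℝ)])
  calc _ ≤ √(2 * (n / 4) * log (m + 1)) := hmax
    _ ≤ √(4 ^ 2 * (n * log (m + 1))) := sqrt_le_sqrt (by nlinarith [n.cast_nonneg (α := ℝ)])
    _ = 4 * √(n * log (m + 1)) := by rw [sqrt_mul (by positivity), sqrt_sq (by norm_num)]

theorem stmt9 {Ω : Type*} [MeasureSpace Ω] [IsProbabilityMeasure (ℙ : Measure Ω)]
    (n : ℕ) (X : Fin n → Ω → ℝ) (hmeas : ∀ i, Measurable (X i))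
    (hbdd : ∀ i ω, X i ω ∈ Set.Icc (0 : ℝ) 1)
    (hindep : iIndepFun X ℙ)
    (μ : Fin n → ℝ) (hμ : ∀ i, μ i = ∫ ω, X i ω)
    (m : ℕ) (Ys : Fin m → Ω → ℝ) (hYs : ∀ t, Measurable (Ys t))
    (hYindep : iIndepFun Ys ℙ)
    (hYid : ∀ t, IdentDistrib (Ys t) (fun ω => ∑ i, (X i ω - μ i)) ℙ ℙ) :
    (∫ ω, max 0 (⨆ t, Ys t ω)) ≤ 4 * Real.sqrt (n * Real.log (m + 1)) :=
  stmt9_general n X hmeas hbdd hindep μ hμ m Ys hYid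
end
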